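/- arXiv:1703.02739 — 4 statements merged into one kernel-verified Lean document; each statement's English description precedes it below -/
import Mathlib

section
/- (Proposition 2.A.) Let A, A^D be real n×n matrices, B a real n×m matrix, K a real m×n matrix, F = A + B K, and β a real n̄×n matrix. Let δû : ℕ → ℝᵐ with ‖δû(j)‖ ≤ ρ for all j, and define δx̂(0) = 0, δx̂(j+1) = A^D δx̂(j) + B δû(j); δx(0) = 0, δx(j+1) = A δx(j) + B(δû(j) + K(δx(j) − δx̂(j))); and ε(j) = δx(j) − δx̂(j). Then for every N ≥ 2, ‖β ε(N)‖ ≤ Σ_{j=2}^{N} ‖β F^{N−j}(A − A^D)‖ · g(j−1), where g(j) := ρ · Σ_{r=1}^{j} ‖(A^D)^{j−r} B‖. -/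
/-! The error `ε` obeys `ε (j + 1) = F ε j + (A - A^D) δx̂ j` with `ε 0 = 0`, and `δx̂` obeys
`δx̂ (j + 1) = A^D δx̂ j + B δû j` with `δx̂ 0 = 0`. Solving both linear recursions by variation of
constants writes `β ε N` as a sum of `β F^(N-j) (A - A^D) δx̂ (j - 1)` and `δx̂ j` as a sum of
`(A^D)^(j-r) B δû (r - 1)`; the triangle inequality and the operator-norm bound, applied to each
sum, give the estimate. -/

open Matrix Finset Filter Topology

/-- Operator norm of a real matrix, induced by the Euclidean norms on domain and codomain. -/
noncomputable def opN {α β : Type*} [Fintype α] [Fintype β] [DecidableEq β]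
    (A : Matrix α β ℝ) : ℝ :=
  ‖LinearMap.toContinuousLinearMap (Matrix.toEuclideanLin A)‖

/-- A real matrix acting on Euclidean vectors. -/
noncomputable def appE {α β : Type*} [Fintype α] [Fintype β] [DecidableEq β]
    (A : Matrix α β ℝ) (v : EuclideanSpace ℝ β) : EuclideanSpace ℝ α :=
  Matrix.toEuclideanLin A v

theorem Module.End.eq_sum_pow_of_succ {R M : Type*} [Semiring R] [AddCommMonoid M] [Module R M]
    (f : Module.End R M) (x y : ℕ → M) (h0 : y 0 = 0) (hsucc : ∀ j, y (j + 1) = f (y j) + x j)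
    (N : ℕ) : y N = ∑ r ∈ Icc 1 N, (f ^ (N - r)) (x (r - 1)) := by
  induction N with
  | zero => simp [h0]
  | succ N ih =>
    rw [hsucc, ih, map_sum, sum_Icc_succ_top (by omega), Nat.sub_self, pow_zero,
      Nat.add_sub_cancel]
    congr 1
    refine sum_congr rfl fun r hr => ?_
    rw [Nat.sub_add_comm (mem_Icc.1 hr).2, pow_succ', Module.End.mul_apply]

section appE

variable {α β γ : Type*} [Fintype α] [Fintype β] [Fintype γ] [DecidableEq β] [DecidableEq γ]

theorem appE_mul (M : Matrix α β ℝ) (N : Matrix β γ ℝ) (v : EuclideanSpace ℝ γ) :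
    appE (M * N) v = appE M (appE N v) := by
  simp [appE]

theorem appE_pow (M : Matrix β β ℝ) (k : ℕ) (v : EuclideanSpace ℝ β) :
    appE (M ^ k) v = (Matrix.toEuclideanLin M ^ k) v := by
  simp [appE]

theorem appE_sum {ι : Type*} (M : Matrix α β ℝ) (s : Finset ι) (v : ι → EuclideanSpace ℝ β) :
    appE M (∑ i ∈ s, v i) = ∑ i ∈ s, appE M (v i) :=
  map_sum _ _ _

theorem norm_appE_le (M : Matrix α β ℝ) (v : EuclideanSpace ℝ β) : ‖appE M v‖ ≤ opN M * ‖v‖ :=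
  (LinearMap.toContinuousLinearMap (Matrix.toEuclideanLin M)).le_opNorm v

theorem norm_sum_appE_le {ι : Type*} (s : Finset ι) (M : ι → Matrix α β ℝ)
    (v : ι → EuclideanSpace ℝ β) (c : ι → ℝ) (hv : ∀ i ∈ s, ‖v i‖ ≤ c i) :
    ‖∑ i ∈ s, appE (M i) (v i)‖ ≤ ∑ i ∈ s, opN (M i) * c i :=
  (norm_sum_le _ _).trans <| sum_le_sum fun i hi =>
    (norm_appE_le _ _).trans <| mul_le_mul_of_nonneg_left (hv i hi) (norm_nonneg _)

theorem appE_eq_sum_pow_of_succ (M : Matrix β β ℝ) (x y : ℕ → EuclideanSpace ℝ β) (h0 : y 0 = 0)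
    (hsucc : ∀ j, y (j + 1) = appE M (y j) + x j) (N : ℕ) :
    y N = ∑ r ∈ Icc 1 N, appE (M ^ (N - r)) (x (r - 1)) := by
  simp only [appE_pow]
  exact Module.End.eq_sum_pow_of_succ (Matrix.toEuclideanLin M) x y h0 hsucc N

end appE

/-- Proposition 2.A: bound on the projected error `‖β ε(N)‖`, i.e. the radius `ρ_w`
of the high-level disturbance set. -/
theorem prop2A {n m nb : ℕ} (A AD : Matrix (Fin n) (Fin n) ℝ)
    (B : Matrix (Fin n) (Fin m) ℝ) (K : Matrix (Fin m) (Fin n) ℝ)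
    (F : Matrix (Fin n) (Fin n) ℝ) (hF : F = A + B * K)
    (β : Matrix (Fin nb) (Fin n) ℝ)
    (ρ : ℝ) (du : ℕ → EuclideanSpace ℝ (Fin m)) (hdu : ∀ j, ‖du j‖ ≤ ρ)
    (dxh : ℕ → EuclideanSpace ℝ (Fin n)) (hdxh0 : dxh 0 = 0)
    (hdxh : ∀ j, dxh (j + 1) = appE AD (dxh j) + appE B (du j))
    (dx : ℕ → EuclideanSpace ℝ (Fin n)) (hdx0 : dx 0 = 0)
    (hdx : ∀ j, dx (j + 1) = appE A (dx j) + appE B (du j + appE K (dx j - dxh j)))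
    (ε : ℕ → EuclideanSpace ℝ (Fin n)) (hε : ∀ j, ε j = dx j - dxh j)
    (g : ℕ → ℝ) (hg : ∀ j, g j = ρ * ∑ r ∈ Finset.Icc 1 j, opN (AD ^ (j - r) * B)) :
    ∀ N, 2 ≤ N →
      ‖appE β (ε N)‖ ≤
        ∑ j ∈ Finset.Icc 2 N, opN (β * F ^ (N - j) * (A - AD)) * g (j - 1) := by
  intro N hN
  have hε0 : ε 0 = 0 := by rw [hε, hdx0, hdxh0, sub_zero]
  have hε_succ : ∀ j, ε (j + 1) = appE F (ε j) + appE (A - AD) (dxh j) := by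
    intro j
    simp only [hε, hdx, hdxh, hF, appE, map_add, map_sub, LinearMap.add_apply,
      LinearMap.sub_apply, Matrix.toLpLin_mul_same, LinearMap.comp_apply]
    abel
  have hdxh_le : ∀ j, ‖dxh j‖ ≤ g j := by
    intro j
    rw [appE_eq_sum_pow_of_succ AD _ dxh hdxh0 hdxh, hg, mul_sum]
    simp only [← appE_mul, mul_comm ρ]
    exact norm_sum_appE_le _ _ _ _ fun r _ => hdu (r - 1)
  have hβε : appE β (ε N) = ∑ j ∈ Icc 2 N, appE (β * F ^ (N - j) * (A - AD)) (dxh (j - 1)) := by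
    rw [appE_eq_sum_pow_of_succ F _ ε hε0 hε_succ, appE_sum,
      ← insert_Icc_add_one_left_eq_Icc (by omega : 1 ≤ N), sum_insert (by simp)]
    simp [hdxh0, appE]
  rw [hβε]
  exact norm_sum_appE_le _ _ _ _ fun j _ => hdxh_le (j - 1)
end

section
/- Let A_L be a real n×n matrix with I − A_L invertible, A_H a real n̄×n̄ matrix with I − A_H invertible, B_L an n×m real matrix, B_H an n̄×m real matrix, and β an n̄×n real matrix, and assume the DC-gain matching condition β (I − A_L)⁻¹ B_L = (I − A_H)⁻¹ B_H. Then for every N ≥ 0, κ(N) := ‖Σ_{j=0}^{N−1} A_H^j B_H − β Σ_{j=0}^{N−1} A_L^j B_L‖ ≤ ‖A_H^N‖ · ‖(I − A_H)⁻¹ B_H‖ + ‖A_L^N‖ · ‖β‖ · ‖(I − A_L)⁻¹ B_L‖. -/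
open Matrix Finset Filter Topology

/-! The truncated sums of the two impulse responses differ from their common DC gain by the tails
`A_H^N (I - A_H)⁻¹ B_H` and `β A_L^N (I - A_L)⁻¹ B_L`, because
`∑_{j<N} A^j = (I - A^N)(I - A)⁻¹`. DC-gain matching cancels the two limits, so `ℬ(N)` is the
difference of the tails, which the triangle inequality and submultiplicativity of the operator
norm bound. -/

namespace Matrix

variable {ι κ ν R : Type*} [Fintype ι] [DecidableEq ι] [Fintype κ] [DecidableEq κ] [CommRing R]

theorem sum_range_pow_mul_eq_sub {A : Matrix ι ι R} (hA : IsUnit (1 - A)) (B : Matrix ι ν R)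
    (N : ℕ) :
    ∑ j ∈ range N, A ^ j * B = (1 - A)⁻¹ * B - A ^ N * ((1 - A)⁻¹ * B) := by
  have hsum : ∑ j ∈ range N, A ^ j = (1 - A ^ N) * (1 - A)⁻¹ := by
    rw [← geom_sum_mul_neg, Matrix.mul_assoc,
      Matrix.mul_nonsing_inv _ ((isUnit_iff_isUnit_det _).mp hA), Matrix.mul_one]
  rw [← Matrix.sum_mul, hsum, Matrix.sub_mul, Matrix.one_mul, Matrix.sub_mul, Matrix.mul_assoc]

theorem sum_sub_mul_sum_eq_of_dcGain_eq {AL : Matrix ι ι R} {AH : Matrix κ κ R}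
    {BL : Matrix ι ν R} {BH : Matrix κ ν R} {β : Matrix κ ι R}
    (hAL : IsUnit (1 - AL)) (hAH : IsUnit (1 - AH))
    (hmatch : β * ((1 - AL)⁻¹ * BL) = (1 - AH)⁻¹ * BH) (N : ℕ) :
    (∑ j ∈ range N, AH ^ j * BH) - β * ∑ j ∈ range N, AL ^ j * BL =
      β * (AL ^ N * ((1 - AL)⁻¹ * BL)) - AH ^ N * ((1 - AH)⁻¹ * BH) := by
  rw [sum_range_pow_mul_eq_sub hAH, sum_range_pow_mul_eq_sub hAL, Matrix.mul_sub, hmatch]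
  abel

end Matrix

open scoped Matrix.Norms.L2Operator

theorem opN_eq_l2_opNorm {α β : Type*} [Fintype α] [Fintype β] [DecidableEq β]
    (A : Matrix α β ℝ) : opN A = ‖A‖ :=
  rfl

/-- Bound on `κ(N)` (equation (21)) under the DC-gain matching condition. -/
theorem kappa_bound {n nb m : ℕ} (AL : Matrix (Fin n) (Fin n) ℝ)
    (AH : Matrix (Fin nb) (Fin nb) ℝ) (BL : Matrix (Fin n) (Fin m) ℝ)
    (BH : Matrix (Fin nb) (Fin m) ℝ) (β : Matrix (Fin nb) (Fin n) ℝ)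
    (hALinv : IsUnit (1 - AL)) (hAHinv : IsUnit (1 - AH))
    (hmatch : β * ((1 - AL)⁻¹ * BL) = (1 - AH)⁻¹ * BH) :
    ∀ N : ℕ,
      opN ((∑ j ∈ Finset.range N, AH ^ j * BH) - β * ∑ j ∈ Finset.range N, AL ^ j * BL)
        ≤ opN (AH ^ N) * opN ((1 - AH)⁻¹ * BH) +
          opN (AL ^ N) * opN β * opN ((1 - AL)⁻¹ * BL) := by
  intro N
  simp only [opN_eq_l2_opNorm]
  rw [sum_sub_mul_sum_eq_of_dcGain_eq hALinv hAHinv hmatch]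
  set X := (1 - AH)⁻¹ * BH
  set Y := (1 - AL)⁻¹ * BL
  calc ‖β * (AL ^ N * Y) - AH ^ N * X‖
      ≤ ‖β * (AL ^ N * Y)‖ + ‖AH ^ N * X‖ := norm_sub_le _ _
    _ ≤ ‖β‖ * (‖AL ^ N‖ * ‖Y‖) + ‖AH ^ N‖ * ‖X‖ := by
        gcongr
        · exact (l2_opNorm_mul _ _).trans (by gcongr; exact l2_opNorm_mul _ _)
        · exact l2_opNorm_mul _ _
    _ = ‖AH ^ N‖ * ‖X‖ + ‖AL ^ N‖ * ‖β‖ * ‖Y‖ := by ring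
end

section
/- Let A_L ∈ M_n(ℝ), B_L ∈ M_{n×m}(ℝ) and suppose there exist C ≥ 0, γ ∈ [0,1) with ‖A_L^j‖ ≤ C γ^j for all j ≥ 0. Let 𝒜 : ℕ → M_{n̄×n}(ℝ), κ : ℕ → ℝ, σ : ℕ → ℝ and ρ_u, ρ_δ > 0, ρ_ū ≥ 0 satisfy: (i) there exist c > 0 and η ∈ [0,1) with ‖𝒜(N)‖ ≤ c η^N for all N; (ii) κ(N) → 0; (iii) there exist N₀ and σ₀ > 0 with σ(N) ≥ σ₀ for N ≥ N₀. Define ℛ(N) = [B_L, A_L B_L, …, A_L^{N−1} B_L] ∈ M_{n×Nm}(ℝ) and χ(N) := √N ρ_u ‖ℛ(N)‖ ‖𝒜(N)‖ / ((1 − ‖A_L^N‖)(√N σ(N) ρ_δ − κ(N) ρ_ū)). Then χ(N) → 0 as N → ∞. -/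
open Matrix Finset Filter Topology

lemma opN_nonneg {α β : Type*} [Fintype α] [Fintype β] [DecidableEq β]
    (A : Matrix α β ℝ) : 0 ≤ opN A := norm_nonneg _

lemma appE_le_opN {α β : Type*} [Fintype α] [Fintype β] [DecidableEq β]
    (A : Matrix α β ℝ) (x : EuclideanSpace ℝ β) :
    ‖Matrix.toEuclideanLin A x‖ ≤ opN A * ‖x‖ :=
  (LinearMap.toContinuousLinearMap (Matrix.toEuclideanLin A)).le_opNorm x

lemma abs_apply_le_norm {α : Type*} [Fintype α] (y : EuclideanSpace ℝ α) (i : α) :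
    |y i| ≤ ‖y‖ := by
  rw [EuclideanSpace.norm_eq, ← Real.sqrt_sq_eq_abs]
  apply Real.sqrt_le_sqrt
  have := Finset.single_le_sum (f := fun j => ‖y j‖ ^ 2)
    (fun j _ => by positivity) (Finset.mem_univ i)
  simpa [Real.norm_eq_abs, sq_abs] using this

lemma abs_entry_le_opN {α β : Type*} [Fintype α] [Fintype β] [DecidableEq β]
    (A : Matrix α β ℝ) (i : α) (j : β) : |A i j| ≤ opN A := by
  have h := appE_le_opN A (EuclideanSpace.single j 1)
  rw [EuclideanSpace.norm_single, norm_one, mul_one] at h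
  refine le_trans ?_ h
  have hval : (Matrix.toEuclideanLin A (EuclideanSpace.single j 1)) i = A i j := by
    show (A *ᵥ Pi.single j 1) i = A i j
    simp [Matrix.mulVec_single]
  calc |A i j| = |(Matrix.toEuclideanLin A (EuclideanSpace.single j 1)) i| := by rw [hval]
    _ ≤ _ := abs_apply_le_norm _ i

lemma toEuclideanLin_mul_apply {α β δ : Type*} [Fintype α] [Fintype β] [Fintype δ]
    [DecidableEq β] [DecidableEq δ] (A : Matrix α β ℝ) (B : Matrix β δ ℝ)
    (x : EuclideanSpace ℝ δ) :
    Matrix.toEuclideanLin (A * B) x = Matrix.toEuclideanLin A (Matrix.toEuclideanLin B x) := by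
  simp [Matrix.toEuclideanLin_apply, Matrix.mulVec_mulVec]

lemma opN_mul_le {α β δ : Type*} [Fintype α] [Fintype β] [Fintype δ]
    [DecidableEq β] [DecidableEq δ] (A : Matrix α β ℝ) (B : Matrix β δ ℝ) :
    opN (A * B) ≤ opN A * opN B := by
  apply ContinuousLinearMap.opNorm_le_bound _ (mul_nonneg (opN_nonneg A) (opN_nonneg B))
  intro x
  have h1 : ‖Matrix.toEuclideanLin (A * B) x‖
      ≤ opN A * (opN B * ‖x‖) := by
    rw [toEuclideanLin_mul_apply]
    exact le_trans (appE_le_opN A _) (mul_le_mul_of_nonneg_left (appE_le_opN B x) (opN_nonneg A))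
  calc ‖LinearMap.toContinuousLinearMap (Matrix.toEuclideanLin (A * B)) x‖
      = ‖Matrix.toEuclideanLin (A * B) x‖ := rfl
    _ ≤ opN A * (opN B * ‖x‖) := h1
    _ = opN A * opN B * ‖x‖ := by ring

lemma opN_le_frob {α β : Type*} [Fintype α] [Fintype β] [DecidableEq β]
    (A : Matrix α β ℝ) : opN A ≤ Real.sqrt (∑ i, ∑ j, (A i j) ^ 2) := by
  apply ContinuousLinearMap.opNorm_le_bound _ (Real.sqrt_nonneg _)
  intro x
  have hx : ‖x‖ = Real.sqrt (∑ j, (x j) ^ 2) := by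
    rw [EuclideanSpace.norm_eq]
    congr 1
    refine Finset.sum_congr rfl fun j _ => ?_
    rw [Real.norm_eq_abs, sq_abs]
  have hAx : ‖LinearMap.toContinuousLinearMap (Matrix.toEuclideanLin A) x‖
      = Real.sqrt (∑ i, (∑ j, A i j * x j) ^ 2) := by
    change ‖Matrix.toEuclideanLin A x‖ = _
    rw [EuclideanSpace.norm_eq]
    congr 1
    refine Finset.sum_congr rfl fun i _ => ?_
    rw [Real.norm_eq_abs, sq_abs]
    congr 1
  rw [hAx, hx, ← Real.sqrt_mul (by positivity)]
  apply Real.sqrt_le_sqrt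
  rw [Finset.sum_mul]
  exact Finset.sum_le_sum fun i _ =>
    Finset.sum_mul_sq_le_sq_mul_sq Finset.univ (fun j => A i j) (fun j => x j)

set_option maxHeartbeats 1000000 in
/-- Third claim of equation (15): `χ(N) → 0` as `N → ∞`. -/
theorem chi_tendsto_zero {n nb m : ℕ} (AL : Matrix (Fin n) (Fin n) ℝ)
    (BL : Matrix (Fin n) (Fin m) ℝ)
    (C γ : ℝ) (hC : 0 ≤ C) (hγ0 : 0 ≤ γ) (hγ1 : γ < 1)
    (hAL : ∀ j, opN (AL ^ j) ≤ C * γ ^ j)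
    (𝒜 : ℕ → Matrix (Fin nb) (Fin n) ℝ) (κ σ : ℕ → ℝ)
    (ρu ρδ ρub : ℝ) (hρu : 0 < ρu) (hρδ : 0 < ρδ) (hρub : 0 ≤ ρub)
    (c η : ℝ) (hc : 0 < c) (hη0 : 0 ≤ η) (hη1 : η < 1)
    (h𝒜 : ∀ N, opN (𝒜 N) ≤ c * η ^ N)
    (hκ : Filter.Tendsto κ Filter.atTop (nhds 0))
    (hσ : ∃ N₀ : ℕ, ∃ σ₀ > (0 : ℝ), ∀ N ≥ N₀, σ₀ ≤ σ N)
    (R : (N : ℕ) → Matrix (Fin n) (Fin N × Fin m) ℝ)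
    (hR : ∀ N, R N = Matrix.of fun i jk => (AL ^ (jk.1 : ℕ) * BL) i jk.2)
    (χ : ℕ → ℝ)
    (hχ : ∀ N, χ N = Real.sqrt N * ρu * opN (R N) * opN (𝒜 N) /
      ((1 - opN (AL ^ N)) * (Real.sqrt N * σ N * ρδ - κ N * ρub))) :
    Filter.Tendsto χ Filter.atTop (nhds 0) := by
  obtain ⟨N₀, σ₀, hσ₀, hσN⟩ := hσ
  set b : ℝ := opN BL with hb_def
  have hb : 0 ≤ b := opN_nonneg _
  have hCb : 0 ≤ C * b := mul_nonneg hC hb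
  set D : ℝ := Real.sqrt (n * m) * (C * b) with hD_def
  have hD : 0 ≤ D := mul_nonneg (Real.sqrt_nonneg _) hCb
  -- uniform bound on ‖R N‖
  have hRb : ∀ N : ℕ, opN (R N) ≤ Real.sqrt N * D := by
    intro N
    have hentry : ∀ (i : Fin n) (jk : Fin N × Fin m), (R N i jk) ^ 2 ≤ (C * b) ^ 2 := by
      intro i jk
      have h1 : |R N i jk| ≤ C * b := by
        rw [hR]
        calc |(AL ^ (jk.1 : ℕ) * BL) i jk.2|
            ≤ opN (AL ^ (jk.1 : ℕ) * BL) := abs_entry_le_opN _ _ _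
          _ ≤ opN (AL ^ (jk.1 : ℕ)) * b := opN_mul_le _ _
          _ ≤ (C * γ ^ (jk.1 : ℕ)) * b :=
              mul_le_mul_of_nonneg_right (hAL _) hb
          _ ≤ C * b := by
              have hγp : γ ^ (jk.1 : ℕ) ≤ 1 := pow_le_one₀ hγ0 hγ1.le
              nlinarith
      calc (R N i jk) ^ 2 = |R N i jk| ^ 2 := (sq_abs _).symm
        _ ≤ (C * b) ^ 2 := by
            have := abs_nonneg (R N i jk)
            nlinarith
    calc opN (R N) ≤ Real.sqrt (∑ i, ∑ jk, (R N i jk) ^ 2) := opN_le_frob _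
      _ ≤ Real.sqrt (∑ _i : Fin n, ∑ _jk : Fin N × Fin m, (C * b) ^ 2) := by
          apply Real.sqrt_le_sqrt
          exact Finset.sum_le_sum fun i _ => Finset.sum_le_sum fun jk _ => hentry i jk
      _ = Real.sqrt N * D := by
          rw [show (∑ _i : Fin n, ∑ _jk : Fin N × Fin m, (C * b) ^ 2)
              = (N : ℝ) * (((n : ℝ) * (m : ℝ)) * (C * b) ^ 2) by
            simp [Finset.sum_const, Finset.card_univ]
            push_cast
            ring]
          rw [Real.sqrt_mul (Nat.cast_nonneg N), hD_def,
            Real.sqrt_mul (by positivity : (0:ℝ) ≤ (n : ℝ) * (m : ℝ)), Real.sqrt_sq hCb]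
  -- geometric decay of N * η^N
  have hηn : ‖η‖ < 1 := by rwa [Real.norm_eq_abs, abs_of_nonneg hη0]
  have hgeo : Tendsto (fun N : ℕ => (N : ℝ) * η ^ N) atTop (𝓝 0) := by
    have := (summable_pow_mul_geometric_of_norm_lt_one 1 hηn).tendsto_atTop_zero
    simpa using this
  have hg : Tendsto (fun N : ℕ => 2 * ((ρu * D * c) * ((N : ℝ) * η ^ N))) atTop (𝓝 0) := by
    have := (hgeo.const_mul (ρu * D * c)).const_mul 2
    simpa using this
  -- eventual bounds
  have hE1 : ∀ᶠ N : ℕ in atTop, C * γ ^ N < 1 / 2 := by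
    have h : Tendsto (fun N : ℕ => C * γ ^ N) atTop (𝓝 0) := by
      have := (tendsto_pow_atTop_nhds_zero_of_lt_one hγ0 hγ1).const_mul C
      simpa using this
    exact h.eventually_lt_const (by norm_num)
  have hE2 : ∀ᶠ N : ℕ in atTop, κ N * ρub < 1 := by
    have h : Tendsto (fun N : ℕ => κ N * ρub) atTop (𝓝 0) := by
      have := hκ.mul_const ρub
      simpa using this
    exact h.eventually_lt_const one_pos
  have hsq : Tendsto (fun N : ℕ => Real.sqrt N) atTop atTop := by
    refine tendsto_atTop_atTop.mpr fun B => ⟨⌈max B 0 ^ 2⌉₊, fun N hN => ?_⟩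
    have h1 : (max B 0) ^ 2 ≤ (N : ℝ) := le_trans (Nat.le_ceil _) (by exact_mod_cast hN)
    calc B ≤ max B 0 := le_max_left _ _
      _ = Real.sqrt ((max B 0) ^ 2) := (Real.sqrt_sq (le_max_right _ _)).symm
      _ ≤ Real.sqrt N := Real.sqrt_le_sqrt h1
  have hE3 : ∀ᶠ N : ℕ in atTop, 2 ≤ Real.sqrt N * (σ₀ * ρδ) :=
    (hsq.atTop_mul_const (by positivity)).eventually_ge_atTop 2
  have hE4 : ∀ᶠ N : ℕ in atTop, σ₀ ≤ σ N := eventually_atTop.mpr ⟨N₀, hσN⟩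
  -- squeeze
  apply squeeze_zero' (g := fun N : ℕ => 2 * ((ρu * D * c) * ((N : ℝ) * η ^ N))) ?_ ?_ hg
  · filter_upwards [hE1, hE2, hE3, hE4] with N h1 h2 h3 h4
    rw [hχ N]
    have hnum : 0 ≤ Real.sqrt N * ρu * opN (R N) * opN (𝒜 N) := by
      have := opN_nonneg (R N); have := opN_nonneg (𝒜 N)
      have := Real.sqrt_nonneg (N : ℝ)
      positivity
    have hALN : opN (AL ^ N) ≤ C * γ ^ N := hAL N
    have hden1 : (1 : ℝ) / 2 ≤ 1 - opN (AL ^ N) := by linarith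
    have hden2 : (1 : ℝ) ≤ Real.sqrt N * σ N * ρδ - κ N * ρub := by
      have hs : Real.sqrt N * (σ₀ * ρδ) ≤ Real.sqrt N * σ N * ρδ := by
        have := Real.sqrt_nonneg (N : ℝ)
        nlinarith
      linarith
    have hden : 0 < (1 - opN (AL ^ N)) * (Real.sqrt N * σ N * ρδ - κ N * ρub) := by
      nlinarith
    exact div_nonneg hnum hden.le
  · filter_upwards [hE1, hE2, hE3, hE4] with N h1 h2 h3 h4
    rw [hχ N]
    have hs0 : (0 : ℝ) ≤ Real.sqrt N := Real.sqrt_nonneg _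
    have hnum : 0 ≤ Real.sqrt N * ρu * opN (R N) * opN (𝒜 N) := by
      have := opN_nonneg (R N); have := opN_nonneg (𝒜 N)
      positivity
    have hALN : opN (AL ^ N) ≤ C * γ ^ N := hAL N
    have hden1 : (1 : ℝ) / 2 ≤ 1 - opN (AL ^ N) := by linarith
    have hden2 : (1 : ℝ) ≤ Real.sqrt N * σ N * ρδ - κ N * ρub := by
      have hs : Real.sqrt N * (σ₀ * ρδ) ≤ Real.sqrt N * σ N * ρδ := by nlinarith
      linarith
    have hdenl : (1 : ℝ) / 2
        ≤ (1 - opN (AL ^ N)) * (Real.sqrt N * σ N * ρδ - κ N * ρub) := by nlinarith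
    have hnumb : Real.sqrt N * ρu * opN (R N) * opN (𝒜 N)
        ≤ (ρu * D * c) * ((N : ℝ) * η ^ N) := by
      have step : Real.sqrt N * ρu * opN (R N) * opN (𝒜 N)
          ≤ Real.sqrt N * ρu * (Real.sqrt N * D) * (c * η ^ N) := by
        apply mul_le_mul
        · apply mul_le_mul_of_nonneg_left (hRb N) (by positivity)
        · exact h𝒜 N
        · exact opN_nonneg _
        · positivity
      have hNN : Real.sqrt N * Real.sqrt N = (N : ℝ) :=
        Real.mul_self_sqrt (Nat.cast_nonneg N)
      calc Real.sqrt N * ρu * opN (R N) * opN (𝒜 N)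
          ≤ Real.sqrt N * ρu * (Real.sqrt N * D) * (c * η ^ N) := step
        _ = (Real.sqrt N * Real.sqrt N) * (ρu * D * (c * η ^ N)) := by ring
        _ = (ρu * D * c) * ((N : ℝ) * η ^ N) := by rw [hNN]; ring
    calc Real.sqrt N * ρu * opN (R N) * opN (𝒜 N) /
        ((1 - opN (AL ^ N)) * (Real.sqrt N * σ N * ρδ - κ N * ρub))
        ≤ Real.sqrt N * ρu * opN (R N) * opN (𝒜 N) / (1 / 2) := by
          exact div_le_div_of_nonneg_left hnum one_half_pos hdenl
        _ = 2 * (Real.sqrt N * ρu * opN (R N) * opN (𝒜 N)) := by ring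
        _ ≤ 2 * ((ρu * D * c) * ((N : ℝ) * η ^ N)) := by linarith
end

section
/- (Theorem 1.(iv), core convergence.) Let F be a real n×n matrix admitting C ≥ 0 and γ ∈ [0,1) with ‖F^k‖ ≤ C γ^k for all k ≥ 0, and let ρ ≥ 0. Define the set S = { Σ_{h=0}^{∞} F^h u_h : u : ℕ → ℝⁿ with ‖u_h‖ ≤ ρ for all h } ⊆ ℝⁿ (the series converges absolutely by the geometric bound). Let x : ℕ → ℝⁿ satisfy x(k+1) = F x(k) + v(k) + w(k), where v(k) → 0 as k → ∞ and ‖w(k)‖ ≤ ρ for all k. Then the Euclidean distance from x(k) to the set S tends to 0 as k → ∞. -/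
/-!
Let `r k = ∑_{h<k} F^h w(k-1-h)` be the state reached from `0` under the input `w` alone. It is a
partial sum of a series defining `S` (pad `w` with zeros), so `dist(x k, S) ≤ ‖x k - r k‖`, and
`e = x - r` solves `e⁺ = F e + v`. Because `‖F^h‖` is summable, `F^k e 0 → 0`, and the forced part
`∑_{h<k} F^h v(k-1-h)` is dominated termwise by `‖F^h‖ sup ‖v‖`, so it tends to `0` by dominated
convergence for series.
-/

open Matrix Finset Filter Topology

theorem tendsto_sum_range_mul_sub_of_summable {a b : ℕ → ℝ} (hb0 : ∀ h, 0 ≤ b h)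
    (hb : Summable b) (ha : Tendsto a atTop (𝓝 0)) :
    Tendsto (fun k => ∑ h ∈ range k, b h * a (k - 1 - h)) atTop (𝓝 0) := by
  classical
  set f : ℕ → ℕ → ℝ := fun k h => if h < k then b h * a (k - 1 - h) else 0
  have hsum : ∀ k, ∑ h ∈ range k, b h * a (k - 1 - h) = ∑' h, f k h := by
    intro k
    rw [tsum_eq_sum (s := range k) fun h hh => if_neg (by simpa using hh)]
    exact sum_congr rfl fun h hh => (if_pos (mem_range.mp hh)).symm
  obtain ⟨M, hM⟩ : ∃ M, ∀ j, |a j| ≤ M := by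
    obtain ⟨M, hM⟩ := ha.abs.bddAbove_range
    exact ⟨M, fun j => hM ⟨j, rfl⟩⟩
  have hpoint : ∀ h, Tendsto (f · h) atTop (𝓝 0) := by
    intro h
    have hshift : Tendsto (fun k => b h * a (k - 1 - h)) atTop (𝓝 0) := by
      simpa [Nat.sub_sub] using (ha.comp (tendsto_sub_atTop_nat (1 + h))).const_mul (b h)
    refine hshift.congr' ?_
    filter_upwards [eventually_gt_atTop h] with k hk
    exact (if_pos hk).symm
  have hbound : ∀ k h, ‖f k h‖ ≤ b h * M := by
    intro k h
    by_cases hk : h < k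
    · simpa [f, hk, abs_mul, abs_of_nonneg (hb0 h)] using
        mul_le_mul_of_nonneg_left (hM (k - 1 - h)) (hb0 h)
    · simpa [f, hk] using mul_nonneg (hb0 h) ((abs_nonneg _).trans (hM 0))
  simpa [hsum] using tendsto_tsum_of_dominated_convergence (hb.mul_right M) hpoint
    (Eventually.of_forall hbound)

section LinearSystem

variable {𝕜 E : Type*} [NontriviallyNormedField 𝕜] [NormedAddCommGroup E] [NormedSpace 𝕜 E]
  (T : E →L[𝕜] E)

/-- The state reached from `0` after `k` steps of `x⁺ = T x + u`. -/
def zeroStateResponse (u : ℕ → E) (k : ℕ) : E :=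
  ∑ h ∈ range k, (T ^ h) (u (k - 1 - h))

/-- The infinite Minkowski sum `⊕_{h=0}^{∞} T^h B_ρ(0)`. -/
def infMinkowskiSum (ρ : ℝ) : Set E :=
  {y | ∃ u : ℕ → E, (∀ h, ‖u h‖ ≤ ρ) ∧ HasSum (fun h => (T ^ h) (u h)) y}

theorem zeroStateResponse_succ (u : ℕ → E) (k : ℕ) :
    zeroStateResponse T u (k + 1) = T (zeroStateResponse T u k) + u k := by
  simp only [zeroStateResponse, sum_range_succ', map_sum, pow_succ', mul_apply_eq_comp]
  simp [Nat.sub_sub, add_comm]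

theorem eq_pow_apply_add_zeroStateResponse {x u : ℕ → E}
    (hx : ∀ k, x (k + 1) = T (x k) + u k) (k : ℕ) :
    x k = (T ^ k) (x 0) + zeroStateResponse T u k := by
  induction k with
  | zero => simp [zeroStateResponse]
  | succ k ih =>
    rw [hx, ih, zeroStateResponse_succ, map_add, pow_succ', mul_apply_eq_comp, add_assoc]

theorem norm_zeroStateResponse_le (u : ℕ → E) (k : ℕ) :
    ‖zeroStateResponse T u k‖ ≤ ∑ h ∈ range k, ‖T ^ h‖ * ‖u (k - 1 - h)‖ :=
  (norm_sum_le _ _).trans (sum_le_sum fun h _ => (T ^ h).le_opNorm _)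

theorem tendsto_zeroStateResponse_zero (hT : Summable fun h => ‖T ^ h‖) {u : ℕ → E}
    (hu : Tendsto u atTop (𝓝 0)) : Tendsto (zeroStateResponse T u) atTop (𝓝 0) := by
  refine squeeze_zero_norm (norm_zeroStateResponse_le T u) ?_
  exact tendsto_sum_range_mul_sub_of_summable (a := fun j => ‖u j‖) (fun h => norm_nonneg _) hT
    (by simpa using hu.norm)

theorem tendsto_zero_of_forall_succ_eq (hT : Summable fun h => ‖T ^ h‖) {x u : ℕ → E}
    (hx : ∀ k, x (k + 1) = T (x k) + u k) (hu : Tendsto u atTop (𝓝 0)) :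
    Tendsto x atTop (𝓝 0) := by
  have hfree : Tendsto (fun k => (T ^ k) (x 0)) atTop (𝓝 0) :=
    squeeze_zero_norm (fun k => (T ^ k).le_opNorm (x 0))
      (by simpa using hT.tendsto_atTop_zero.mul_const ‖x 0‖)
  rw [funext (eq_pow_apply_add_zeroStateResponse T hx)]
  simpa using hfree.add (tendsto_zeroStateResponse_zero T hT hu)

theorem zeroStateResponse_mem_infMinkowskiSum {ρ : ℝ} (hρ : 0 ≤ ρ) {w : ℕ → E}
    (hw : ∀ k, ‖w k‖ ≤ ρ) (k : ℕ) : zeroStateResponse T w k ∈ infMinkowskiSum T ρ := by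
  classical
  set u : ℕ → E := fun h => if h < k then w (k - 1 - h) else 0
  refine ⟨u, fun h => ?_, ?_⟩
  · dsimp only [u]
    split_ifs
    exacts [hw _, by simpa using hρ]
  · have hsupp : ∀ h ∉ range k, (T ^ h) (u h) = 0 := fun h hh => by
      simp [u, mem_range.not.mp hh]
    have hwindow : ∀ h ∈ range k, (T ^ h) (u h) = (T ^ h) (w (k - 1 - h)) :=
      fun h hh => by simp [u, mem_range.mp hh]
    rw [zeroStateResponse, ← sum_congr rfl hwindow]
    exact hasSum_sum_of_ne_finset_zero hsupp

theorem tendsto_infDist_infMinkowskiSum (hT : Summable fun h => ‖T ^ h‖) {ρ : ℝ} (hρ : 0 ≤ ρ)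
    {x v w : ℕ → E} (hx : ∀ k, x (k + 1) = T (x k) + v k + w k)
    (hv : Tendsto v atTop (𝓝 0)) (hw : ∀ k, ‖w k‖ ≤ ρ) :
    Tendsto (fun k => Metric.infDist (x k) (infMinkowskiSum T ρ)) atTop (𝓝 0) := by
  have herr : Tendsto (fun k => x k - zeroStateResponse T w k) atTop (𝓝 0) := by
    refine tendsto_zero_of_forall_succ_eq T hT (fun k => ?_) hv
    rw [hx, zeroStateResponse_succ, map_sub]
    abel
  refine squeeze_zero (fun k => Metric.infDist_nonneg) (fun k => ?_)
    (by simpa using herr.norm)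
  simpa [dist_eq_norm] using
    Metric.infDist_le_dist_of_mem (zeroStateResponse_mem_infMinkowskiSum T hρ hw k)

end LinearSystem

theorem robust_convergence_to_set_general {n : ℕ} (F : Matrix (Fin n) (Fin n) ℝ)
    (C γ : ℝ) (hγ0 : 0 ≤ γ) (hγ1 : γ < 1)
    (hF : ∀ k, opN (F ^ k) ≤ C * γ ^ k)
    (ρ : ℝ) (hρ : 0 ≤ ρ)
    (S : Set (EuclideanSpace ℝ (Fin n)))
    (hS : S = {y | ∃ u : ℕ → EuclideanSpace ℝ (Fin n),
      (∀ h, ‖u h‖ ≤ ρ) ∧ HasSum (fun h => appE (F ^ h) (u h)) y})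
    (x v w : ℕ → EuclideanSpace ℝ (Fin n))
    (hx : ∀ k, x (k + 1) = appE F (x k) + v k + w k)
    (hv : Filter.Tendsto v Filter.atTop (nhds 0))
    (hw : ∀ k, ‖w k‖ ≤ ρ) :
    Filter.Tendsto (fun k => Metric.infDist (x k) S) Filter.atTop (nhds 0) := by
  set T := Matrix.toEuclideanCLM (𝕜 := ℝ) F
  have hpow : ∀ k, T ^ k = Matrix.toEuclideanCLM (𝕜 := ℝ) (F ^ k) :=
    fun k => (map_pow _ F k).symm
  have hT : Summable fun k => ‖T ^ k‖ :=
    .of_nonneg_of_le (fun k => norm_nonneg _) (fun k => hpow k ▸ hF k)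
      ((summable_geometric_of_lt_one hγ0 hγ1).mul_left C)
  have hSeq : S = infMinkowskiSum T ρ := by
    simp only [hS, infMinkowskiSum, hpow]
    rfl
  rw [hSeq]
  exact tendsto_infDist_infMinkowskiSum T hT hρ hx hv hw

/-- Theorem 1.(iv), core convergence: the state of `x⁺ = F x + v + w`, with `v → 0` and
`‖w‖ ≤ ρ`, converges to the infinite Minkowski sum `S = ⊕_{h=0}^{∞} F^h B_ρ(0)`. -/
theorem robust_convergence_to_set {n : ℕ} (F : Matrix (Fin n) (Fin n) ℝ)
    (C γ : ℝ) (hC : 0 ≤ C) (hγ0 : 0 ≤ γ) (hγ1 : γ < 1)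
    (hF : ∀ k, opN (F ^ k) ≤ C * γ ^ k)
    (ρ : ℝ) (hρ : 0 ≤ ρ)
    (S : Set (EuclideanSpace ℝ (Fin n)))
    (hS : S = {y | ∃ u : ℕ → EuclideanSpace ℝ (Fin n),
      (∀ h, ‖u h‖ ≤ ρ) ∧ HasSum (fun h => appE (F ^ h) (u h)) y})
    (x v w : ℕ → EuclideanSpace ℝ (Fin n))
    (hx : ∀ k, x (k + 1) = appE F (x k) + v k + w k)
    (hv : Filter.Tendsto v Filter.atTop (nhds 0))
    (hw : ∀ k, ‖w k‖ ≤ ρ) :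
    Filter.Tendsto (fun k => Metric.infDist (x k) S) Filter.atTop (nhds 0) :=
  robust_convergence_to_set_general F C γ hγ0 hγ1 hF ρ hρ S hS x v w hx hv hw
end
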